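/- Let A_μ := I − αΦᵀDΦ + αγΦᵀDPΠ^μΦ for stochastic policies μ, and A_π the same for deterministic π. Then for every stochastic policy μ, A_μ = ∑_π c_π(μ) A_π with convex weights c_π(μ) = ∏_s μ(π(s)|s); in particular A_μ lies in the convex hull of the finite family {A_π : π deterministic}. -/
import Mathlib

open scoped Matrix

lemma stmt17_key {S A : Type*} [Fintype S] [Fintype A] [DecidableEq S] [DecidableEq A]
    (μ : S → A → ℝ) (hμ1 : ∀ s, ∑ a, μ s a = 1) (s : S) (a : A) :
    ∑ π : S → A, (∏ s', μ s' (π s')) * (if π s = a then (1 : ℝ) else 0) = μ s a := by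
  classical
  have h := Finset.prod_univ_sum (κ := fun _ : S => A) (fun _ => (Finset.univ : Finset A))
    (fun s' a' => if s' = s then (if a' = a then μ s a else 0) else μ s' a')
  rw [Fintype.piFinset_univ] at h
  have hL : (∏ s' : S, ∑ a' : A, if s' = s then (if a' = a then μ s a else 0) else μ s' a')
      = μ s a := by
    rw [Finset.prod_eq_single s]
    · simp
    · intro b _ hb
      simp [hb, hμ1 b]
    · simp
  have hR : ∀ π : S → A,
      (∏ s' : S, if s' = s then (if π s' = a then μ s a else 0) else μ s' (π s'))
        = (∏ s', μ s' (π s')) * (if π s = a then (1 : ℝ) else 0) := by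
    intro π
    by_cases hπ : π s = a
    · rw [if_pos hπ, mul_one]
      apply Finset.prod_congr rfl
      intro b _
      by_cases hb : b = s
      · subst hb; simp [hπ]
      · simp [hb]
    · rw [if_neg hπ, mul_zero]
      apply Finset.prod_eq_zero (Finset.mem_univ s)
      simp [hπ]
  rw [hL] at h
  rw [h]
  exact Finset.sum_congr rfl fun π _ => (hR π).symm

/-- With `A_μ := I − αΦᵀDΦ + αγΦᵀDPΠ^μΦ`, every stochastic-policy mode
decomposes as `A_μ = ∑_π c_π(μ) A_π` with the convex weights `c_π(μ) = ∏_s μ(π(s)|s)`;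
in particular `A_μ` lies in the convex hull of the deterministic-policy family. -/
theorem stmt17 {S A : Type*} [Fintype S] [Fintype A] [DecidableEq S] [DecidableEq A]
    {m : ℕ}
    (Φ : Matrix (S × A) (Fin m) ℝ) (D : Matrix (S × A) (S × A) ℝ)
    (hDdiag : ∀ p q : S × A, p ≠ q → D p q = 0) (hDpos : ∀ p : S × A, 0 < D p p)
    (P : Matrix (S × A) S ℝ) (α γ : ℝ) (hα : 0 < α) (hγ : 0 < γ)
    (μ : S → A → ℝ) (hμ0 : ∀ s a, 0 ≤ μ s a) (hμ1 : ∀ s, ∑ a, μ s a = 1) :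
    (1 : Matrix (Fin m) (Fin m) ℝ) - α • (Φᵀ * D * Φ)
        + (α * γ) •
            (Φᵀ * D * P *
              (Matrix.of fun (s : S) (p : S × A) => if p.1 = s then μ s p.2 else 0) * Φ)
      = ∑ π : S → A, (∏ s, μ s (π s)) •
          ((1 : Matrix (Fin m) (Fin m) ℝ) - α • (Φᵀ * D * Φ)
            + (α * γ) •
                (Φᵀ * D * P *
                  (Matrix.of fun (s : S) (p : S × A) =>
                    if p.1 = s ∧ π s = p.2 then (1 : ℝ) else 0) * Φ)) := by
  classical
  have hsum1 : ∑ π : S → A, (∏ s, μ s (π s)) = 1 := by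
    have h := Finset.prod_univ_sum (κ := fun _ : S => A) (fun _ => (Finset.univ : Finset A))
      (fun s' a' => μ s' a')
    rw [Fintype.piFinset_univ] at h
    rw [← h]
    simp [hμ1]
  have hPi : (Matrix.of fun (s : S) (p : S × A) => if p.1 = s then μ s p.2 else 0)
      = ∑ π : S → A, (∏ s, μ s (π s)) •
          (Matrix.of fun (s : S) (p : S × A) => if p.1 = s ∧ π s = p.2 then (1 : ℝ) else 0) := by
    ext s p
    rw [Matrix.sum_apply]
    simp only [Matrix.smul_apply, Matrix.of_apply, smul_eq_mul]
    by_cases hp : p.1 = s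
    · simp only [hp, if_true, true_and]
      exact (stmt17_key μ hμ1 s p.2).symm
    · simp [hp]
  rw [hPi]
  simp only [smul_add, smul_sub, Finset.sum_add_distrib, Finset.sum_sub_distrib,
    ← Finset.sum_smul, hsum1, one_smul, Matrix.mul_sum, Matrix.sum_mul, Matrix.mul_smul,
    Matrix.smul_mul, Finset.smul_sum, smul_smul]
  congr 1
  · rw [← Finset.sum_mul, hsum1, one_mul]
  · apply Finset.sum_congr rfl
    intro π _
    rw [mul_comm]
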